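/- Let (X_i) be a Markov chain on a countable state space, A a subset of the state space, y ∈ A, and G_A(x, y) = Σ_{i=0}^{∞} P^x(X_i = y, i < T_{A^c}) the Green's function. Let L = Σ_{i < T_{A^c}} 1{X_i = y} be the number of visits to y before exiting A. Then for every positive integer k and every starting point x, E^x[L^k] ≤ k! · G_A(x, y) · G_A(y, y)^{k−1}. -/

import Mathlib

open MeasureTheory
open scoped ENNReal Nat

/-!
Writing `L = ∑ᵢ 1{i is a visit}` and splitting off the smallest index of each `k`-tuple of
visit times gives `L ^ k ≤ k! · ∑_{i₁ ≤ ⋯ ≤ iₖ} 1{i₁, …, iₖ are visits}`. On the event that `i₁`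
is a visit, the later visits are exactly the visits of the path shifted by `i₁`, which sits at
`y`. The Markov property at time `i₁` therefore factors the expectation of the sum started at `x`
into `G_A(x, y)` times the same expectation for `k - 1` started at `y`, and induction on `k`
gives `G_A(x, y) · G_A(y, y) ^ (k - 1)`.
-/

theorem ENNReal.tsum_pow {α : Type*} (g : α → ℝ≥0∞) (k : ℕ) :
    (∑' i, g i) ^ k = ∑' t : Fin k → α, ∏ m, g (t m) := by
  induction k with
  | zero => simp [tsum_fintype]
  | succ k ih =>
    rw [pow_succ', ih, ← (Fin.consEquiv fun _ => α).tsum_eq, ENNReal.tsum_prod',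
      ← ENNReal.tsum_mul_right]
    simp [Fin.consEquiv, Fin.prod_univ_succ, ENNReal.tsum_mul_left]

/-- `monotoneTupleSum k g = ∑_{i₁ ≤ ⋯ ≤ iₖ} g i₁ ⋯ g iₖ`, by recursion on the smallest index. -/
noncomputable def monotoneTupleSum : ℕ → (ℕ → ℝ≥0∞) → ℝ≥0∞
  | 0, _ => 1
  | k + 1, g => ∑' i, g i * monotoneTupleSum k fun j => g (i + j)

theorem tsum_pow_succ_le_tsum_mul_tail_pow (g : ℕ → ℝ≥0∞) (k : ℕ) :
    (∑' i, g i) ^ (k + 1) ≤ (k + 1) * ∑' i, g i * (∑' j, g (i + j)) ^ k := by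
  -- every tuple arises by inserting its minimum `i` into a tuple of values `≥ i`
  have hsurj : Function.Surjective fun q : Fin (k + 1) × ℕ × (Fin k → ℕ) =>
      Fin.insertNth (α := fun _ => ℕ) q.1 q.2.1 fun m => q.2.1 + q.2.2 m := by
    intro t
    obtain ⟨p, hp⟩ := Finite.exists_min t
    refine ⟨(p, t p, fun m => t (p.succAbove m) - t p), funext fun m => ?_⟩
    induction m using p.succAboveCases with
    | x => simp
    | p m => simp [Nat.add_sub_cancel' (hp _)]
  calc (∑' i, g i) ^ (k + 1) = ∑' t : Fin (k + 1) → ℕ, ∏ m, g (t m) := ENNReal.tsum_pow g _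
    _ ≤ ∑' q : Fin (k + 1) × ℕ × (Fin k → ℕ),
          ∏ m, g (Fin.insertNth (α := fun _ => ℕ) q.1 q.2.1 (fun m => q.2.1 + q.2.2 m) m) :=
      ENNReal.tsum_le_tsum_comp_of_surjective hsurj _
    _ = ∑' q : Fin (k + 1) × ℕ × (Fin k → ℕ), g q.2.1 * ∏ m, g (q.2.1 + q.2.2 m) := by
      refine tsum_congr fun q => ?_
      rw [Fin.prod_univ_succAbove _ q.1]
      simp
    _ = (k + 1) * ∑' i, g i * (∑' j, g (i + j)) ^ k := by
      simp [ENNReal.tsum_prod', tsum_fintype, ENNReal.tsum_mul_left, ENNReal.tsum_pow]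

theorem tsum_pow_le_factorial_mul_monotoneTupleSum (k : ℕ) (g : ℕ → ℝ≥0∞) :
    (∑' i, g i) ^ k ≤ k ! * monotoneTupleSum k g := by
  induction k generalizing g with
  | zero => simp [monotoneTupleSum]
  | succ k ih =>
    calc (∑' i, g i) ^ (k + 1) ≤ (k + 1) * ∑' i, g i * (∑' j, g (i + j)) ^ k :=
          tsum_pow_succ_le_tsum_mul_tail_pow g k
      _ ≤ (k + 1) * ∑' i, g i * (k ! * monotoneTupleSum k fun j => g (i + j)) := by
          gcongr with i; exact ih _
      _ = (k + 1)! * monotoneTupleSum (k + 1) g := by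
          simp only [monotoneTupleSum, Nat.factorial_succ, Nat.cast_mul, mul_left_comm (g _),
            ENNReal.tsum_mul_left]
          push_cast; ring

theorem measurable_monotoneTupleSum {Ω : Type*} [MeasurableSpace Ω] {F : Ω → ℕ → ℝ≥0∞}
    (hF : ∀ i, Measurable fun ω => F ω i) (k : ℕ) :
    Measurable fun ω => monotoneTupleSum k (F ω) := by
  induction k generalizing F with
  | zero => exact measurable_const
  | succ k ih => exact Measurable.tsum fun i => (hF i).mul (ih fun j => hF (i + j))

section Paths

variable {S : Type*}

def pathShift (n : ℕ) (ω : ℕ → S) : ℕ → S := fun k => ω (n + k)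

variable (A : Set S) (y : S)

def visitTimes (ω : ℕ → S) : Set ℕ := {i | ω i = y ∧ ∀ j ≤ i, ω j ∈ A}

noncomputable def visitIndicator (ω : ℕ → S) : ℕ → ℝ≥0∞ := (visitTimes A y ω).indicator 1

variable {A y}

theorem mem_visitTimes_congr {ω ω' : ℕ → S} {n : ℕ} (h : ∀ k ≤ n, ω k = ω' k) :
    n ∈ visitTimes A y ω ↔ n ∈ visitTimes A y ω' := by
  simp only [visitTimes, Set.mem_ofPred_eq, h n le_rfl]
  exact and_congr_right fun _ => forall₂_congr fun j hj => by rw [h j hj]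

theorem add_mem_visitTimes_iff {ω : ℕ → S} {i j : ℕ} (hi : i ∈ visitTimes A y ω) :
    i + j ∈ visitTimes A y ω ↔ j ∈ visitTimes A y (pathShift i ω) := by
  simp only [visitTimes, pathShift, Set.mem_ofPred_eq]
  refine and_congr_right fun _ => ⟨fun h l hl => h _ (by omega), fun h l hl => ?_⟩
  rcases le_or_gt l i with hli | hil
  · exact hi.2 l hli
  · simpa [Nat.add_sub_cancel' hil.le] using h (l - i) (by omega)

theorem visitIndicator_mul_monotoneTupleSum (ω : ℕ → S) (i n : ℕ) :
    visitIndicator A y ω i * monotoneTupleSum n (fun j => visitIndicator A y ω (i + j)) =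
      {ω | i ∈ visitTimes A y ω}.indicator
        (fun ω => monotoneTupleSum n (visitIndicator A y (pathShift i ω))) ω := by
  by_cases hi : i ∈ visitTimes A y ω
  · have : (fun j => visitIndicator A y ω (i + j)) = visitIndicator A y (pathShift i ω) :=
      funext fun j => by
        classical
        simp only [visitIndicator, Set.indicator_apply, add_mem_visitTimes_iff hi, Pi.one_apply]
    rw [this]
    simp [visitIndicator, hi]
  · simp [visitIndicator, hi]

end Paths

section MarkovChain

variable {S : Type*} [MeasurableSpace S]

theorem measurable_pathShift (n : ℕ) : Measurable (pathShift (S := S) n) :=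
  measurable_pi_lambda _ fun k => measurable_pi_apply (n + k)

def IsMarkovFamily (P : S → Measure (ℕ → S)) : Prop :=
  ∀ (x y : S) (n : ℕ) (E B : Set (ℕ → S)), MeasurableSet B →
    (∀ ω ω' : ℕ → S, (∀ k ≤ n, ω k = ω' k) → (ω ∈ E ↔ ω' ∈ E)) →
    E ⊆ {ω | ω n = y} →
    P x (E ∩ pathShift n ⁻¹' B) = P x E * P y B

namespace IsMarkovFamily

variable {P : S → Measure (ℕ → S)} {x y : S} {n : ℕ} {E : Set (ℕ → S)}

theorem map_pathShift_restrict (hP : IsMarkovFamily P)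
    (hE : ∀ ω ω' : ℕ → S, (∀ k ≤ n, ω k = ω' k) → (ω ∈ E ↔ ω' ∈ E))
    (hEy : E ⊆ {ω | ω n = y}) :
    ((P x).restrict E).map (pathShift n) = P x E • P y := by
  ext B hB
  rw [Measure.map_apply (measurable_pathShift n) hB,
    Measure.restrict_apply (measurable_pathShift n hB), Set.inter_comm, hP x y n E B hB hE hEy]
  rfl

theorem setLIntegral_comp_pathShift (hP : IsMarkovFamily P)
    (hE : ∀ ω ω' : ℕ → S, (∀ k ≤ n, ω k = ω' k) → (ω ∈ E ↔ ω' ∈ E))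
    (hEy : E ⊆ {ω | ω n = y}) {f : (ℕ → S) → ℝ≥0∞} (hf : Measurable f) :
    ∫⁻ ω in E, f (pathShift n ω) ∂P x = P x E * ∫⁻ ω, f ω ∂P y := by
  rw [← lintegral_map hf (measurable_pathShift n), hP.map_pathShift_restrict hE hEy,
    lintegral_smul_measure, smul_eq_mul]

end IsMarkovFamily

noncomputable def greenFunction (A : Set S) (y : S) (P : S → Measure (ℕ → S)) (x : S) : ℝ≥0∞ :=
  ∑' i, P x {ω | i ∈ visitTimes A y ω}

variable {A : Set S} {y : S}

theorem measurableSet_visitTimes [MeasurableSingletonClass S] (hA : MeasurableSet A) (i : ℕ) :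
    MeasurableSet {ω : ℕ → S | i ∈ visitTimes A y ω} :=
  measurableSet_setOfPred.2 <| by unfold visitTimes; fun_prop

theorem measurable_visitIndicator [MeasurableSingletonClass S] (hA : MeasurableSet A) (i : ℕ) :
    Measurable fun ω : ℕ → S => visitIndicator A y ω i :=
  measurable_const.indicator (measurableSet_visitTimes hA i)

theorem IsMarkovFamily.lintegral_monotoneTupleSum_succ [MeasurableSingletonClass S]
    {P : S → Measure (ℕ → S)} (hP : IsMarkovFamily P) (hA : MeasurableSet A) (z : S) (n : ℕ) :
    ∫⁻ ω, monotoneTupleSum (n + 1) (visitIndicator A y ω) ∂P z =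
      greenFunction A y P z * ∫⁻ ω, monotoneTupleSum n (visitIndicator A y ω) ∂P y := by
  have hM : Measurable fun ω => monotoneTupleSum n (visitIndicator A y ω) :=
    measurable_monotoneTupleSum (measurable_visitIndicator hA) n
  have hMi (i : ℕ) : Measurable ({ω | i ∈ visitTimes A y ω}.indicator
      fun ω => monotoneTupleSum n (visitIndicator A y (pathShift i ω))) :=
    (hM.comp (measurable_pathShift i)).indicator (measurableSet_visitTimes hA i)
  simp only [monotoneTupleSum, visitIndicator_mul_monotoneTupleSum]
  rw [lintegral_tsum fun i => (hMi i).aemeasurable, greenFunction, ← ENNReal.tsum_mul_right]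
  refine tsum_congr fun i => ?_
  rw [lintegral_indicator (measurableSet_visitTimes hA i)]
  exact hP.setLIntegral_comp_pathShift (fun ω ω' h => mem_visitTimes_congr h)
    (fun ω hω => hω.1) hM

theorem IsMarkovFamily.lintegral_monotoneTupleSum [MeasurableSingletonClass S]
    {P : S → Measure (ℕ → S)} (hP : IsMarkovFamily P) (hA : MeasurableSet A)
    [IsProbabilityMeasure (P y)] (n : ℕ) :
    ∫⁻ ω, monotoneTupleSum n (visitIndicator A y ω) ∂P y = greenFunction A y P y ^ n := by
  induction n with
  | zero => simp [monotoneTupleSum]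
  | succ n ih => rw [hP.lintegral_monotoneTupleSum_succ hA, ih, pow_succ']

end MarkovChain

theorem local_time_moment_bound_general {S : Type*} [Countable S] [MeasurableSpace S]
    [MeasurableSingletonClass S]
    (Px : S → Measure (ℕ → S)) (hprob : ∀ x, IsProbabilityMeasure (Px x))
    (hMarkov : ∀ (x y : S) (n : ℕ) (E B : Set (ℕ → S)), MeasurableSet B →
      (∀ ω ω' : ℕ → S, (∀ k ≤ n, ω k = ω' k) → (ω ∈ E ↔ ω' ∈ E)) →
      E ⊆ {ω | ω n = y} →
      Px x (E ∩ (fun ω k => ω (n + k)) ⁻¹' B) = Px x E * Px y B)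
    (A : Set S) (y : S) (x : S) (k : ℕ) (hk : 1 ≤ k) :
    ∫⁻ ω, (∑' i : ℕ, ({i' : ℕ | ω i' = y ∧ ∀ j ≤ i', ω j ∈ A}.indicator
        (fun _ => (1 : ℝ≥0∞)) i)) ^ k ∂(Px x)
      ≤ (Nat.factorial k : ℝ≥0∞)
        * (∑' i : ℕ, Px x {ω | ω i = y ∧ ∀ j ≤ i, ω j ∈ A})
        * (∑' i : ℕ, Px y {ω | ω i = y ∧ ∀ j ≤ i, ω j ∈ A}) ^ (k - 1) := by
  obtain ⟨n, rfl⟩ : ∃ n, k = n + 1 := ⟨k - 1, by omega⟩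
  have hP : IsMarkovFamily Px := hMarkov
  have hA : MeasurableSet A := A.to_countable.measurableSet
  have := hprob y
  calc ∫⁻ ω, (∑' i, visitIndicator A y ω i) ^ (n + 1) ∂Px x
      ≤ ∫⁻ ω, (n + 1)! * monotoneTupleSum (n + 1) (visitIndicator A y ω) ∂Px x :=
        lintegral_mono fun ω => tsum_pow_le_factorial_mul_monotoneTupleSum _ _
    _ = (n + 1)! * (greenFunction A y Px x * greenFunction A y Px y ^ n) := by
        rw [lintegral_const_mul _ (measurable_monotoneTupleSum (measurable_visitIndicator hA) _),
          hP.lintegral_monotoneTupleSum_succ hA, hP.lintegral_monotoneTupleSum hA]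
    _ = _ := by rw [← mul_assoc]; rfl

/-- Moment bound for the number of visits to `y` before exiting `A`:
`E^x[L^k] ≤ k! · G_A(x,y) · G_A(y,y)^{k-1}`.  The Markov chain on the countable state
space `S` is encoded by its family of path measures `Px`, with the Markov property
expressed for events determined by the first `n+1` coordinates. -/
theorem local_time_moment_bound {S : Type*} [Countable S] [MeasurableSpace S]
    [MeasurableSingletonClass S]
    (Px : S → Measure (ℕ → S)) (hprob : ∀ x, IsProbabilityMeasure (Px x))
    (hstart : ∀ x, Px x {ω | ω 0 = x} = 1)
    (hMarkov : ∀ (x y : S) (n : ℕ) (E B : Set (ℕ → S)), MeasurableSet B →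
      (∀ ω ω' : ℕ → S, (∀ k ≤ n, ω k = ω' k) → (ω ∈ E ↔ ω' ∈ E)) →
      E ⊆ {ω | ω n = y} →
      Px x (E ∩ (fun ω k => ω (n + k)) ⁻¹' B) = Px x E * Px y B)
    (A : Set S) (y : S) (hy : y ∈ A) (x : S) (k : ℕ) (hk : 1 ≤ k) :
    ∫⁻ ω, (∑' i : ℕ, ({i' : ℕ | ω i' = y ∧ ∀ j ≤ i', ω j ∈ A}.indicator
        (fun _ => (1 : ℝ≥0∞)) i)) ^ k ∂(Px x)
      ≤ (Nat.factorial k : ℝ≥0∞)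
        * (∑' i : ℕ, Px x {ω | ω i = y ∧ ∀ j ≤ i, ω j ∈ A})
        * (∑' i : ℕ, Px y {ω | ω i = y ∧ ∀ j ≤ i, ω j ∈ A}) ^ (k - 1) :=
  local_time_moment_bound_general Px hprob hMarkov A y x k hk
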